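/- Let T = (S, I, O, λ_S, s0, Δ_S) be a complete deterministic TFSM with timeouts, U = (R, I∪{𝟙}, O∪{𝟙}, λ_R, r0) an untimed FSM, and ∼ ⊆ (S×ℝ≥0)×R a 𝟙-bisimulation. Then for every (s,0) ∼ r and every real t ≥ 1: (i) if (s,0) →t (s',x') then there exists r' with (s',x') ∼ r' and r reaches r' in U reading ⌊t⌋ consecutive 𝟙 inputs (producing ⌊t⌋ 𝟙 outputs); (ii) if r reaches r' in U reading ⌊t⌋ consecutive 𝟙 inputs, then there exists (s',x') with (s',x') ∼ r' and (s,0) →t (s',x'). -/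
import Mathlib


open scoped Classical

namespace TFSMPaper

/-- A guard: an interval with integer (natural) endpoints; `hi = none` means `∞`;
`lclosed`/`rclosed` say whether the left/right delimiter is closed. -/
structure Guard where
  lo : ℕ
  hi : Option ℕ
  lclosed : Bool
  rclosed : Bool
deriving DecidableEq

/-- Membership of a real clock value in a guard. -/
def Guard.mem (g : Guard) (x : ℝ) : Prop :=
  (if g.lclosed then (g.lo : ℝ) ≤ x else (g.lo : ℝ) < x) ∧
  (match g.hi with
    | none => True
    | some n => if g.rclosed then x ≤ (n : ℝ) else x < (n : ℝ))

/-- `J ⊆ g` as subsets of nonnegative reals. -/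
def Guard.subset (J g : Guard) : Prop := ∀ x : ℝ, 0 ≤ x → J.mem x → g.mem x

/-- A guard is left-closed and right-open. -/
def Guard.LCRO (g : Guard) : Prop := g.lclosed = true ∧ g.rclosed = false

/-- The point interval `[n,n]`. -/
def ptG (n : ℕ) : Guard := ⟨n, some n, true, true⟩

/-- The open interval `(n,n+1)`. -/
def opG (n : ℕ) : Guard := ⟨n, some (n + 1), false, false⟩

/-- The unbounded interval `(N,∞)`. -/
def infG (N : ℕ) : Guard := ⟨N, none, false, false⟩

/-- The set `𝕀_N` of abstract intervals. -/
def IN (N : ℕ) : Set Guard :=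
  {g | (∃ n ≤ N, g = ptG n) ∨ (∃ n < N, g = opG n) ∨ g = infG N}

/-- All integer constants appearing in `g` are at most `N`. -/
def Guard.boundedBy (g : Guard) (N : ℕ) : Prop :=
  g.lo ≤ N ∧ ∀ n, g.hi = some n → n ≤ N

/-- A timed word: strictly increasing, nonnegative timestamps. -/
def IsTimedWord {A : Type*} (v : List (A × ℝ)) : Prop :=
  v.Chain' (fun p q => p.2 < q.2) ∧ ∀ p ∈ v, (0 : ℝ) ≤ p.2

/-- Delete the timestamps of a timed word. -/
def untime {A : Type*} (v : List (A × ℝ)) : List A := v.map Prod.fst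

/-! ### Untimed FSMs -/

/-- An untimed FSM with input alphabet `Γi`, output alphabet `Γo` and states `R`. -/
structure FSM (Γi Γo R : Type*) where
  trans : R → Γi → Γo → R → Prop
  init : R

/-- `Run U r v w r'`: from state `r`, reading input word `v`, `U` can produce
output word `w` and reach `r'`. -/
inductive FSM.Run {Γi Γo R : Type*} (U : FSM Γi Γo R) : R → List Γi → List Γo → R → Prop
  | nil (r : R) : FSM.Run U r [] [] r
  | cons {r r' rf : R} {a : Γi} {b : Γo} {v : List Γi} {w : List Γo} :
      U.trans r a b r' → FSM.Run U r' v w rf → FSM.Run U r (a :: v) (b :: w) rf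

/-- The behavior of `U`: `w ∈ B_U(v)`. -/
def FSM.Produces {Γi Γo R : Type*} (U : FSM Γi Γo R) (v : List Γi) (w : List Γo) : Prop :=
  ∃ rf, U.Run U.init v w rf

def FSM.Complete {Γi Γo R : Type*} (U : FSM Γi Γo R) : Prop :=
  ∀ r a, ∃ b r', U.trans r a b r'

def FSM.Deterministic {Γi Γo R : Type*} (U : FSM Γi Γo R) : Prop :=
  ∀ r a b b' r' r'', U.trans r a b r' → U.trans r a b' r'' → b = b' ∧ r' = r''

/-! ### TFSMs with timed guards -/

/-- A TFSM with timed guards. -/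
structure TFSMG (S I O : Type*) where
  trans : S → I → Guard → O → S → Prop
  init : S

/-- Input/output transition `(s,x) →(i,o) (s',0)`: some transition with a guard
containing the current clock value `x` fires. -/
def TFSMG.IOTrans {S I O : Type*} (M : TFSMG S I O) (s : S) (x : ℝ) (i : I) (o : O)
    (s' : S) : Prop :=
  ∃ g, M.trans s i g o s' ∧ g.mem x

/-- `RunFrom M s t v w s'`: starting in state `s` (clock 0) at absolute time `t`,
reading the timed input word `v`, `M` produces the timed output word `w`
(outputs are instantaneous) and reaches `s'`. -/
inductive TFSMG.RunFrom {S I O : Type*} (M : TFSMG S I O) :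
    S → ℝ → List (I × ℝ) → List (O × ℝ) → S → Prop
  | nil (s : S) (t : ℝ) : TFSMG.RunFrom M s t [] [] s
  | cons {s s' sf : S} {t t' : ℝ} {i : I} {o : O} {v : List (I × ℝ)} {w : List (O × ℝ)} :
      M.IOTrans s (t' - t) i o s' → TFSMG.RunFrom M s' t' v w sf →
      TFSMG.RunFrom M s t ((i, t') :: v) ((o, t') :: w) sf

/-- The behavior of `M`: `w ∈ B_M(v)`. -/
def TFSMG.Produces {S I O : Type*} (M : TFSMG S I O) (v : List (I × ℝ))
    (w : List (O × ℝ)) : Prop :=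
  ∃ sf, M.RunFrom M.init 0 v w sf

/-- Completeness: in every state, for every input and clock value, some transition fires. -/
def TFSMG.Complete {S I O : Type*} (M : TFSMG S I O) : Prop :=
  ∀ s i (x : ℝ), 0 ≤ x → ∃ g o s', M.trans s i g o s' ∧ g.mem x

/-- Determinism: at most one input/output transition for each state, input and clock value. -/
def TFSMG.Deterministic {S I O : Type*} (M : TFSMG S I O) : Prop :=
  ∀ s i (x : ℝ) g g' o o' s' s'', M.trans s i g o s' → M.trans s i g' o' s'' →
    g.mem x → g'.mem x → o = o' ∧ s' = s''

/-- `N ≥ max(M)`: every integer constant in the guards of `M` is at most `N`. -/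
def TFSMG.boundedBy {S I O : Type*} (M : TFSMG S I O) (N : ℕ) : Prop :=
  ∀ s i g o s', M.trans s i g o s' → g.boundedBy N

/-- The unique interval of `𝕀_N` containing the delay `t`. -/
noncomputable def INdur (N : ℕ) (t : ℝ) : Guard :=
  if (N : ℝ) < t then infG N
  else if ∃ n : ℕ, (n : ℝ) = t then ptG ⌊t⌋₊
  else opG ⌊t⌋₊

/-- The `𝕀_N`-abstraction of a timed word (the extra `ℝ` argument is the previous
timestamp, initially `0`). -/
noncomputable def INabs {A : Type*} (N : ℕ) : ℝ → List (A × ℝ) → List (A × Guard)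
  | _, [] => []
  | t, (a, t') :: v => (a, INdur N (t' - t)) :: INabs N t' v

/-- The abstract FSM `A^N_M` of a TFSM with timed guards. -/
def absFSMG {S I O : Type*} (N : ℕ) (M : TFSMG S I O) : FSM (I × Guard) O S where
  trans s p o s' := p.2 ∈ IN N ∧ ∃ g, M.trans s p.1 g o s' ∧ p.2.subset g
  init := M.init

/-- `𝕀_N`-bisimulation between a TFSM with timed guards and an untimed FSM. -/
def INBisim {S I O R : Type*} (N : ℕ) (M : TFSMG S I O) (U : FSM (I × Guard) O R)
    (Rel : S → R → Prop) : Prop :=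
  ∀ s r, Rel s r →
    (∀ i g o s', M.trans s i g o s' → ∀ J ∈ IN N, J.subset g →
        ∃ r', U.trans r (i, J) o r' ∧ Rel s' r') ∧
    (∀ i J o r', J ∈ IN N → U.trans r (i, J) o r' →
        ∃ g s', M.trans s i g o s' ∧ J.subset g ∧ Rel s' r')

/-! ### TFSMs with timeouts -/

/-- A TFSM with timeouts; `timeout s = (s', none)` means timeout `∞`. -/
structure TFSMT (S I O : Type*) where
  trans : S → I → O → S → Prop
  init : S
  timeout : S → S × Option ℕ
  timeout_pos : ∀ s n, (timeout s).2 = some n → 0 < n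

/-- The timed transition relation `(s,x) →t (s',x')`. -/
inductive TFSMT.Elapse {S I O : Type*} (M : TFSMT S I O) : S → ℝ → ℝ → S → ℝ → Prop
  | stay {s : S} {x t : ℝ} : 0 ≤ x → 0 ≤ t →
      (∀ n, (M.timeout s).2 = some n → x + t < n) → TFSMT.Elapse M s x t s (x + t)
  | tmo {s : S} {x t : ℝ} {n : ℕ} : 0 ≤ x → 0 ≤ t → (M.timeout s).2 = some n →
      x + t = n → TFSMT.Elapse M s x t (M.timeout s).1 0
  | comp {s s' s'' : S} {x x' x'' t₁ t₂ : ℝ} :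
      TFSMT.Elapse M s x t₁ s' x' → TFSMT.Elapse M s' x' t₂ s'' x'' →
      TFSMT.Elapse M s x (t₁ + t₂) s'' x''

/-- Input/output transition `(s,x) →(i,o) (s',0)`. -/
def TFSMT.IOTrans {S I O : Type*} (M : TFSMT S I O) (s : S) (x : ℝ) (i : I) (o : O)
    (s' : S) : Prop :=
  M.trans s i o s' ∧ 0 ≤ x ∧ ∀ n, (M.timeout s).2 = some n → x < n

/-- Run of a TFSM with timeouts on a timed input word. -/
inductive TFSMT.RunFrom {S I O : Type*} (M : TFSMT S I O) :
    S → ℝ → List (I × ℝ) → List (O × ℝ) → S → Prop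
  | nil (s : S) (t : ℝ) : TFSMT.RunFrom M s t [] [] s
  | cons {s s'' s' sf : S} {x t t' : ℝ} {i : I} {o : O} {v : List (I × ℝ)} {w : List (O × ℝ)} :
      M.Elapse s 0 (t' - t) s'' x → M.IOTrans s'' x i o s' →
      TFSMT.RunFrom M s' t' v w sf →
      TFSMT.RunFrom M s t ((i, t') :: v) ((o, t') :: w) sf

/-- The behavior of `M`: `w ∈ B_M(v)`. -/
def TFSMT.Produces {S I O : Type*} (M : TFSMT S I O) (v : List (I × ℝ))
    (w : List (O × ℝ)) : Prop :=
  ∃ sf, M.RunFrom M.init 0 v w sf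

def TFSMT.Complete {S I O : Type*} (M : TFSMT S I O) : Prop :=
  ∀ s i, ∃ o s', M.trans s i o s'

def TFSMT.Deterministic {S I O : Type*} (M : TFSMT S I O) : Prop :=
  ∀ s i o o' s' s'', M.trans s i o s' → M.trans s i o' s'' → o = o' ∧ s' = s''

/-- The `𝟙`-abstraction of a timed word: `none` is the delay symbol `𝟙`
(the extra `ℝ` argument is the previous timestamp, initially `0`). -/
noncomputable def oneAbs {A : Type*} : ℝ → List (A × ℝ) → List (Option A)
  | _, [] => []
  | t, (a, t') :: v => List.replicate ⌊t' - t⌋₊ none ++ some a :: oneAbs t' v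

/-- `𝟙`-bisimulation between a TFSM with timeouts and an untimed FSM
(`none` plays the role of `𝟙` in both alphabets). -/
def OneBisim {S I O R : Type*} (M : TFSMT S I O) (U : FSM (Option I) (Option O) R)
    (Rel : S → ℝ → R → Prop) : Prop :=
  ∀ s x r, Rel s x r →
    (∀ t s' x', 0 ≤ t → ⌊x + t⌋₊ = ⌊x + 1⌋₊ → M.Elapse s x t s' x' →
        ∃ r', U.trans r none none r' ∧ Rel s' x' r') ∧
    (∀ r', U.trans r none none r' → ∀ t, 0 ≤ t → ⌊x + t⌋₊ = ⌊x + 1⌋₊ →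
        ∃ s' x', M.Elapse s x t s' x' ∧ Rel s' x' r') ∧
    (∀ t i o s', 0 ≤ t → ⌊x⌋₊ = ⌊x + t⌋₊ → M.Elapse s x t s (x + t) →
        M.IOTrans s (x + t) i o s' → ∃ r', U.trans r (some i) (some o) r' ∧ Rel s' 0 r') ∧
    (∀ i o r', U.trans r (some i) (some o) r' → ∀ t, 0 ≤ t → ⌊x⌋₊ = ⌊x + t⌋₊ →
        ∃ s', M.Elapse s x t s (x + t) ∧ M.IOTrans s (x + t) i o s' ∧ Rel s' 0 r')

/-- The `𝟙`-abstract FSM `A_M` of a TFSM with timeouts. -/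
def oneAbsFSM {S I O : Type*} (M : TFSMT S I O) : FSM (Option I) (Option O) (S × ℕ) where
  trans p a b q :=
    (a = none ∧ b = none ∧
      ((q.1 = p.1 ∧ q.2 = p.2 + 1 ∧ ∃ m, (M.timeout p.1).2 = some m ∧ p.2 + 1 < m) ∨
       (M.timeout p.1 = (q.1, some (p.2 + 1)) ∧ q.2 = 0) ∨
       (p.2 = 0 ∧ (M.timeout p.1).2 = none ∧ q = p))) ∨
    (∃ i o, a = some i ∧ b = some o ∧ M.trans p.1 i o q.1 ∧ q.2 = 0)
  init := (M.init, 0)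

/-- One step of the timeout function (only from states with a finite timeout). -/
def TFSMT.TimeoutStep {S I O : Type*} (M : TFSMT S I O) (s s' : S) : Prop :=
  (M.timeout s).2 ≠ none ∧ s' = (M.timeout s).1

/-- No cycles of timeout transitions. -/
def TFSMT.LoopFree {S I O : Type*} (M : TFSMT S I O) : Prop :=
  ∀ s, ¬ Relation.TransGen M.TimeoutStep s s

/-! ### TFSMs with timed guards and timeouts -/

/-- A TFSM with both timed guards and timeouts. -/
structure TFSMGT (S I O : Type*) where
  trans : S → I → Guard → O → S → Prop
  init : S
  timeout : S → S × Option ℕ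

/-- The timed transition relation `(s,x) →t (s',x')`. -/
inductive TFSMGT.Elapse {S I O : Type*} (M : TFSMGT S I O) : S → ℝ → ℝ → S → ℝ → Prop
  | stay {s : S} {x t : ℝ} : 0 ≤ x → 0 ≤ t →
      (∀ n, (M.timeout s).2 = some n → x + t < n) → TFSMGT.Elapse M s x t s (x + t)
  | tmo {s : S} {x t : ℝ} {n : ℕ} : 0 ≤ x → 0 ≤ t → (M.timeout s).2 = some n →
      x + t = n → TFSMGT.Elapse M s x t (M.timeout s).1 0
  | comp {s s' s'' : S} {x x' x'' t₁ t₂ : ℝ} :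
      TFSMGT.Elapse M s x t₁ s' x' → TFSMGT.Elapse M s' x' t₂ s'' x'' →
      TFSMGT.Elapse M s x (t₁ + t₂) s'' x''

/-- Input/output transition `(s,x) →(i,o) (s',0)`. -/
def TFSMGT.IOTrans {S I O : Type*} (M : TFSMGT S I O) (s : S) (x : ℝ) (i : I) (o : O)
    (s' : S) : Prop :=
  (∃ g, M.trans s i g o s' ∧ g.mem x) ∧ 0 ≤ x ∧ ∀ n, (M.timeout s).2 = some n → x < n

/-- Run of a TFSM with timed guards and timeouts on a timed input word. -/
inductive TFSMGT.RunFrom {S I O : Type*} (M : TFSMGT S I O) :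
    S → ℝ → List (I × ℝ) → List (O × ℝ) → S → Prop
  | nil (s : S) (t : ℝ) : TFSMGT.RunFrom M s t [] [] s
  | cons {s s'' s' sf : S} {x t t' : ℝ} {i : I} {o : O} {v : List (I × ℝ)} {w : List (O × ℝ)} :
      M.Elapse s 0 (t' - t) s'' x → M.IOTrans s'' x i o s' →
      TFSMGT.RunFrom M s' t' v w sf →
      TFSMGT.RunFrom M s t ((i, t') :: v) ((o, t') :: w) sf

def TFSMGT.Produces {S I O : Type*} (M : TFSMGT S I O) (v : List (I × ℝ))
    (w : List (O × ℝ)) : Prop :=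
  ∃ sf, M.RunFrom M.init 0 v w sf

def TFSMGT.Complete {S I O : Type*} (M : TFSMGT S I O) : Prop :=
  ∀ s i (x : ℝ), 0 ≤ x → (∀ n, (M.timeout s).2 = some n → x < n) →
    ∃ g o s', M.trans s i g o s' ∧ g.mem x

def TFSMGT.Deterministic {S I O : Type*} (M : TFSMGT S I O) : Prop :=
  ∀ s i (x : ℝ) g g' o o' s' s'', M.trans s i g o s' → M.trans s i g' o' s'' →
    g.mem x → g'.mem x → o = o' ∧ s' = s''

/-- `N ≥ max(M)`: all guard constants and all finite timeouts of `M` are at most `N`. -/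
def TFSMGT.boundedBy {S I O : Type*} (M : TFSMGT S I O) (N : ℕ) : Prop :=
  (∀ s i g o s', M.trans s i g o s' → g.boundedBy N) ∧
  (∀ s m, (M.timeout s).2 = some m → m ≤ N)

/-- `N = max(M)`: `N` is the greatest integer constant appearing in `M`. -/
def TFSMGT.maxConst {S I O : Type*} (M : TFSMGT S I O) (N : ℕ) : Prop :=
  M.boundedBy N ∧ ∀ N', M.boundedBy N' → N ≤ N'

/-- Number of `𝕥` symbols abstracting a delay `t`. -/
noncomputable def tNum (t : ℝ) : ℕ :=
  if ∃ n : ℕ, (n : ℝ) = t then 2 * ⌊t⌋₊ else 2 * ⌊t⌋₊ + 1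

/-- The `𝕥`-abstraction of a timed word: `none` is the delay symbol `𝕥`
(the extra `ℝ` argument is the previous timestamp, initially `0`). -/
noncomputable def tAbs {A : Type*} : ℝ → List (A × ℝ) → List (Option A)
  | _, [] => []
  | t, (a, t') :: v => List.replicate (tNum (t' - t)) none ++ some a :: tAbs t' v

/-- `𝕥`-bisimulation between a TFSM with timed guards and timeouts and an untimed FSM. -/
def TBisim {S I O R : Type*} (M : TFSMGT S I O) (U : FSM (Option I) (Option O) R)
    (Rel : S → ℝ → R → Prop) : Prop :=
  ∀ s x r, Rel s x r →
    (∀ t s' x', 0 < t → t < 1 → ((∃ n : ℕ, (n : ℝ) = x) ∨ ∃ n : ℕ, (n : ℝ) = x + t) →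
        M.Elapse s x t s' x' → ∃ r', U.trans r none none r' ∧ Rel s' x' r') ∧
    (∀ r', U.trans r none none r' →
        ∀ t, 0 < t → t < 1 → ((∃ n : ℕ, (n : ℝ) = x) ∨ ∃ n : ℕ, (n : ℝ) = x + t) →
        ∃ s' x', M.Elapse s x t s' x' ∧ Rel s' x' r') ∧
    (∀ i o s', M.IOTrans s x i o s' → ∃ r', U.trans r (some i) (some o) r' ∧ Rel s' 0 r') ∧
    (∀ i o r', U.trans r (some i) (some o) r' →
        ∃ s', M.IOTrans s x i o s' ∧ Rel s' 0 r')

/-- The `𝕥`-abstract FSM `A_M` of a TFSM with timed guards and timeouts. -/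
def tAbsFSM {S I O : Type*} (N : ℕ) (M : TFSMGT S I O) :
    FSM (Option I) (Option O) (S × Guard) where
  trans p a b q :=
    (a = none ∧ b = none ∧
      ((∃ n, p.2 = ptG n ∧ q = (p.1, opG n) ∧
          ∀ m, (M.timeout p.1).2 = some m → n + 1 ≤ m) ∨
       (∃ n, p.2 = opG n ∧ q = (p.1, ptG (n + 1)) ∧
          ∀ m, (M.timeout p.1).2 = some m → n + 1 < m) ∨
       (∃ n, p.2 = opG n ∧ M.timeout p.1 = (q.1, some (n + 1)) ∧ q.2 = ptG 0) ∨
       (p.2 = infG N ∧ (M.timeout p.1).2 = none ∧ q = p))) ∨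
    (∃ i o, a = some i ∧ b = some o ∧ q.2 = ptG 0 ∧
      ∃ g, M.trans p.1 i g o q.1 ∧ p.2.subset g)
  init := (M.init, ptG 0)

lemma elapse_shift {S I O : Type} (T : TFSMT S I O) {s s' : S} {x t x' : ℝ}
    (h : T.Elapse s x t s' x') : 0 ≤ x' ∧ ∃ m : ℕ, x' + (m : ℝ) = x + t := by
  induction h with
  | stay hx ht _ => exact ⟨by linarith, 0, by simp⟩
  | @tmo s x t n hx ht hn he => exact ⟨le_refl 0, n, by simp [he]⟩
  | comp h1 h2 ih1 ih2 =>
    obtain ⟨hx1, m1, hm1⟩ := ih1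
    obtain ⟨hx2, m2, hm2⟩ := ih2
    exact ⟨hx2, m1 + m2, by push_cast; linarith⟩

lemma elapse_split {S I O : Type} (T : TFSMT S I O) {s s' : S} {x t x' : ℝ}
    (h : T.Elapse s x t s' x') : ∀ a, 0 ≤ a → a ≤ t →
    ∃ s₁ x₁, T.Elapse s x a s₁ x₁ ∧ T.Elapse s₁ x₁ (t - a) s' x' := by
  induction h with
  | @stay s x t hx ht hn =>
    intro a ha hat
    refine ⟨s, x + a, TFSMT.Elapse.stay hx ha
      (fun n h => by have := hn n h; linarith), ?_⟩
    have e : x + t = (x + a) + (t - a) := by ring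
    rw [e]
    exact TFSMT.Elapse.stay (by linarith) (by linarith)
      (fun n h => by have := hn n h; linarith)
  | @tmo s x t n hx ht hn he =>
    intro a ha hat
    rcases lt_or_eq_of_le hat with hlt | heq
    · refine ⟨s, x + a, TFSMT.Elapse.stay hx ha (fun m hm => ?_), ?_⟩
      · rw [hn] at hm
        obtain rfl := Option.some_inj.mp hm
        linarith
      · exact TFSMT.Elapse.tmo (by linarith) (by linarith) hn (by linarith)
    · subst heq
      refine ⟨(T.timeout s).1, 0, TFSMT.Elapse.tmo hx ha hn he, ?_⟩
      rw [sub_self]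
      have h0 : T.Elapse (T.timeout s).1 0 0 (T.timeout s).1 (0 + 0) :=
        TFSMT.Elapse.stay le_rfl le_rfl
          (fun m hm => by have := T.timeout_pos _ m hm
                          push_cast
                          simpa using by exact_mod_cast this)
      simpa using h0
  | @comp s s' s'' x x' x'' t₁ t₂ h1 h2 ih1 ih2 =>
    intro a ha hat
    rcases le_or_gt a t₁ with hle | hgt
    · obtain ⟨m, xm, hm1, hm2⟩ := ih1 a ha hle
      refine ⟨m, xm, hm1, ?_⟩
      have e : t₁ + t₂ - a = (t₁ - a) + t₂ := by ring
      rw [e]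
      exact TFSMT.Elapse.comp hm2 h2
    · obtain ⟨m, xm, hm1, hm2⟩ := ih2 (a - t₁) (by linarith) (by linarith)
      refine ⟨m, xm, ?_, ?_⟩
      · have e : a = t₁ + (a - t₁) := by ring
        rw [e]
        exact TFSMT.Elapse.comp h1 hm1
      · have e : t₁ + t₂ - a = t₂ - (a - t₁) := by ring
        rw [e]
        exact hm2

lemma floor_nat_add_unit {n : ℕ} {t : ℝ} (h1 : 1 ≤ t) (h2 : t < 2) :
    ⌊(n : ℝ) + t⌋₊ = ⌊(n : ℝ) + 1⌋₊ := by
  have hr : ⌊(n : ℝ) + 1⌋₊ = n + 1 := by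
    rw [show ((n : ℝ) + 1) = ((n + 1 : ℕ) : ℝ) by push_cast; ring, Nat.floor_natCast]
  rw [hr, Nat.floor_eq_iff (by positivity)]
  constructor
  · push_cast; linarith
  · push_cast; linarith

lemma stmt5_forward {S R I O : Type} (T : TFSMT S I O)
    (U : FSM (Option I) (Option O) R)
    (Rel : S → ℝ → R → Prop) (hB : OneBisim T U Rel) :
    ∀ k : ℕ, ∀ (s : S) (n : ℕ) (r : R), Rel s (n : ℝ) r →
      ∀ t s' x', ((k : ℝ) + 1) ≤ t → t < (k : ℝ) + 2 → T.Elapse s (n : ℝ) t s' x' →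
      ∃ r', Rel s' x' r' ∧
        U.Run r (List.replicate (k + 1) none) (List.replicate (k + 1) none) r' := by
  intro k
  induction k with
  | zero =>
    intro s n r hr t s' x' h1 h2 he
    have hfl : ⌊(n : ℝ) + t⌋₊ = ⌊(n : ℝ) + 1⌋₊ :=
      floor_nat_add_unit (by push_cast at h1; linarith) (by push_cast at h2; linarith)
    obtain ⟨r', htr, hrel⟩ := (hB s (n : ℝ) r hr).1 t s' x' (by linarith) hfl he
    exact ⟨r', hrel, FSM.Run.cons htr (FSM.Run.nil r')⟩
  | succ k ih =>
    intro s n r hr t s' x' h1 h2 he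
    obtain ⟨s₁, x₁, he1, he2⟩ := elapse_split T he 1 zero_le_one
      (by push_cast at h1; linarith)
    obtain ⟨hx1, m, hm⟩ := elapse_shift T he1
    have hmle : m ≤ n + 1 := by
      have : (m : ℝ) ≤ (n : ℝ) + 1 := by linarith
      exact_mod_cast this
    have hn1 : ((n + 1 - m : ℕ) : ℝ) = x₁ := by
      rw [Nat.cast_sub hmle]
      push_cast
      linarith
    obtain ⟨r1, htr, hrel1⟩ := (hB s (n : ℝ) r hr).1 1 s₁ x₁ zero_le_one rfl he1
    rw [← hn1] at hrel1 he2
    obtain ⟨r', hrel, hrun⟩ := ih s₁ (n + 1 - m) r1 hrel1 (t - 1) s' x'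
      (by push_cast at h1 ⊢; linarith) (by push_cast at h2 ⊢; linarith) he2
    refine ⟨r', hrel, ?_⟩
    rw [List.replicate_succ]
    exact FSM.Run.cons htr hrun

lemma stmt5_backward {S R I O : Type} (T : TFSMT S I O)
    (U : FSM (Option I) (Option O) R)
    (Rel : S → ℝ → R → Prop) (hB : OneBisim T U Rel) :
    ∀ k : ℕ, ∀ (s : S) (n : ℕ) (r : R), Rel s (n : ℝ) r →
      ∀ r', U.Run r (List.replicate (k + 1) none) (List.replicate (k + 1) none) r' →
      ∀ t, ((k : ℝ) + 1) ≤ t → t < (k : ℝ) + 2 →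
      ∃ s' x', Rel s' x' r' ∧ T.Elapse s (n : ℝ) t s' x' := by
  intro k
  induction k with
  | zero =>
    intro s n r hr r' hrun t h1 h2
    rw [List.replicate_succ, List.replicate_succ, List.replicate_zero,
      List.replicate_zero] at hrun
    cases hrun with
    | cons htr hrest =>
      cases hrest
      have hfl : ⌊(n : ℝ) + t⌋₊ = ⌊(n : ℝ) + 1⌋₊ :=
        floor_nat_add_unit (by push_cast at h1; linarith) (by push_cast at h2; linarith)
      obtain ⟨s', x', he, hrel'⟩ := (hB s (n : ℝ) r hr).2.1 _ htr t (by linarith) hfl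
      exact ⟨s', x', hrel', he⟩
  | succ k ih =>
    intro s n r hr r' hrun t h1 h2
    rw [List.replicate_succ, List.replicate_succ (n := k + 1)] at hrun
    cases hrun with
    | @cons _ r1 _ _ _ _ _ htr hrest =>
      obtain ⟨s₁, x₁, he1, hrel1⟩ := (hB s (n : ℝ) r hr).2.1 _ htr 1 zero_le_one rfl
      obtain ⟨hx1, m, hm⟩ := elapse_shift T he1
      have hmle : m ≤ n + 1 := by
        have : (m : ℝ) ≤ (n : ℝ) + 1 := by linarith
        exact_mod_cast this
      have hn1 : ((n + 1 - m : ℕ) : ℝ) = x₁ := by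
        rw [Nat.cast_sub hmle]
        push_cast
        linarith
      rw [← hn1] at hrel1 he1
      obtain ⟨s', x', hrel', he2⟩ := ih s₁ (n + 1 - m) r1 hrel1 r' hrest (t - 1)
        (by push_cast at h1 ⊢; linarith) (by push_cast at h2 ⊢; linarith)
      refine ⟨s', x', hrel', ?_⟩
      have e : t = 1 + (t - 1) := by ring
      rw [e]
      exact TFSMT.Elapse.comp he1 he2

/-- For a `𝟙`-bisimulation `∼` between a complete deterministic
TFSM with timeouts `T` and an untimed FSM `U`: for every `(s,0) ∼ r` and `t ≥ 1`,
(i) if `(s,0) →t (s',x')` then some `r'` with `(s',x') ∼ r'` is reached from `r`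
reading `⌊t⌋` consecutive `𝟙` inputs (producing `⌊t⌋` `𝟙` outputs);
(ii) conversely every such `r'` corresponds to some `(s',x') ∼ r'` with
`(s,0) →t (s',x')`. -/
theorem statement5 {S R I O : Type} [Finite S] (T : TFSMT S I O)
    (U : FSM (Option I) (Option O) R)
    (hC : T.Complete) (hD : T.Deterministic)
    (Rel : S → ℝ → R → Prop) (hB : OneBisim T U Rel) :
    ∀ s r, Rel s 0 r → ∀ t : ℝ, 1 ≤ t →
      (∀ s' x', T.Elapse s 0 t s' x' →
        ∃ r', Rel s' x' r' ∧
          U.Run r (List.replicate ⌊t⌋₊ none) (List.replicate ⌊t⌋₊ none) r') ∧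
      (∀ r', U.Run r (List.replicate ⌊t⌋₊ none) (List.replicate ⌊t⌋₊ none) r' →
        ∃ s' x', Rel s' x' r' ∧ T.Elapse s 0 t s' x') := by
  intro s r hrel t ht
  have ht0 : (0 : ℝ) ≤ t := by linarith
  have hfl1 : 1 ≤ ⌊t⌋₊ := by
    rw [Nat.one_le_iff_ne_zero, Ne, Nat.floor_eq_zero]
    push_neg
    exact ht
  obtain ⟨k, hk⟩ := Nat.exists_eq_add_of_le hfl1
  have hk' : ⌊t⌋₊ = k + 1 := by omega
  have hle : ((k : ℝ) + 1) ≤ t := by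
    have := Nat.floor_le ht0
    rw [hk'] at this
    push_cast at this
    linarith
  have hlt : t < (k : ℝ) + 2 := by
    have := Nat.lt_floor_add_one t
    rw [hk'] at this
    push_cast at this
    linarith
  have hrel0 : Rel s ((0 : ℕ) : ℝ) r := by simpa using hrel
  constructor
  · intro s' x' he
    have he' : T.Elapse s ((0 : ℕ) : ℝ) t s' x' := by simpa using he
    obtain ⟨r', hr', hrun⟩ := stmt5_forward T U Rel hB k s 0 r hrel0 t s' x' hle hlt he'
    rw [hk']
    exact ⟨r', hr', hrun⟩
  · intro r' hrun
    rw [hk'] at hrun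
    obtain ⟨s', x', hr', he⟩ := stmt5_backward T U Rel hB k s 0 r hrel0 r' hrun t hle hlt
    exact ⟨s', x', hr', by simpa using he⟩

end TFSMPaper
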